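/- arXiv:2002.10553 — 7 statements merged into one kernel-verified Lean document; each statement's English description precedes it below -/
import Mathlib

section
/- The minimum over {(α_j, u_j)}_{j=1}^m of (1/2)‖Σ_j (Xu_j)_+ α_j − y‖₂² + (β/2) Σ_j (‖u_j‖₂² + α_j²) equals the minimum over {(α_j, u_j)}_{j=1}^m with ‖u_j‖₂ ≤ 1 for all j of (1/2)‖Σ_j (Xu_j)_+ α_j − y‖₂² + β Σ_j |α_j|. -/
open Matrix

noncomputable def relu (t : ℝ) : ℝ := max t 0

noncomputable def l2norm {d : ℕ} (x : Fin d → ℝ) : ℝ := Real.sqrt (∑ i, x i ^ 2)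

lemma l2norm_nonneg {d : ℕ} (x : Fin d → ℝ) : 0 ≤ l2norm x := Real.sqrt_nonneg _

lemma l2norm_sq {d : ℕ} (x : Fin d → ℝ) : l2norm x ^ 2 = ∑ i, x i ^ 2 :=
  Real.sq_sqrt (Finset.sum_nonneg fun i _ => sq_nonneg _)

lemma l2norm_smul {d : ℕ} (c : ℝ) (x : Fin d → ℝ) :
    l2norm (c • x) = |c| * l2norm x := by
  unfold l2norm
  have h : ∑ i, (c • x) i ^ 2 = c ^ 2 * ∑ i, x i ^ 2 := by
    rw [Finset.mul_sum]
    exact Finset.sum_congr rfl fun i _ => by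
      simp only [Pi.smul_apply, smul_eq_mul]; ring
  rw [h, Real.sqrt_mul (sq_nonneg c), Real.sqrt_sq_eq_abs]

lemma l2norm_eq_zero {d : ℕ} {x : Fin d → ℝ} (h : l2norm x = 0) : x = 0 := by
  unfold l2norm at h
  have h1 : ∑ i, x i ^ 2 = 0 :=
    le_antisymm (Real.sqrt_eq_zero'.mp h)
      (Finset.sum_nonneg fun i _ => sq_nonneg _)
  have h2 := (Finset.sum_eq_zero_iff_of_nonneg (fun i _ => sq_nonneg (x i))).mp h1
  funext i
  exact (pow_eq_zero_iff two_ne_zero).mp (h2 i (Finset.mem_univ i))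

lemma relu_mul {c t : ℝ} (hc : 0 ≤ c) : relu (c * t) = c * relu t := by
  unfold relu
  rw [mul_max_of_nonneg _ _ hc, mul_zero]

/-- Equivalence of weight-decay regularized training and the ℓ₁-penalized formulation
with unit-norm hidden weights (Lemma 1). -/
theorem weight_decay_eq_l1 {n d m : ℕ} (X : Matrix (Fin n) (Fin d) ℝ)
    (y : Fin n → ℝ) (β : ℝ) (hβ : 0 < β) :
    sInf {c : ℝ | ∃ (α : Fin m → ℝ) (u : Fin m → Fin d → ℝ),
        c = (1 / 2) * (∑ i, (∑ j, relu ((X.mulVec (u j)) i) * α j - y i) ^ 2)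
            + (β / 2) * (∑ j, ((l2norm (u j)) ^ 2 + (α j) ^ 2))} =
    sInf {c : ℝ | ∃ (α : Fin m → ℝ) (u : Fin m → Fin d → ℝ),
        (∀ j, l2norm (u j) ≤ 1) ∧
        c = (1 / 2) * (∑ i, (∑ j, relu ((X.mulVec (u j)) i) * α j - y i) ^ 2)
            + β * (∑ j, |α j|)} := by
  apply csInf_eq_csInf_of_forall_exists_le
  · -- every element of the weight-decay set dominates an element of the ℓ₁ set
    rintro c ⟨α, u, rfl⟩
    classical
    set α' : Fin m → ℝ := fun j => if u j = 0 then 0 else l2norm (u j) * α j with hα'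
    set u' : Fin m → Fin d → ℝ :=
      fun j => if u j = 0 then 0 else (l2norm (u j))⁻¹ • u j with hu'
    have hnorm : ∀ j, l2norm (u' j) ≤ 1 := by
      intro j
      by_cases h : u j = 0
      · simp only [hu', h, if_pos]
        have : l2norm (0 : Fin d → ℝ) = 0 := by
          unfold l2norm; simp
        simp [this]
      · have hpos : 0 < l2norm (u j) := by
          rcases lt_or_eq_of_le (l2norm_nonneg (u j)) with h1 | h1
          · exact h1
          · exact absurd (l2norm_eq_zero h1.symm) h
        simp only [hu', h, if_neg, if_false]
        rw [l2norm_smul, abs_of_nonneg (inv_nonneg.mpr hpos.le),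
          inv_mul_cancel₀ hpos.ne']
    have hfit : ∀ i j, relu ((X.mulVec (u' j)) i) * α' j
        = relu ((X.mulVec (u j)) i) * α j := by
      intro i j
      by_cases h : u j = 0
      · simp only [hα', hu', h, if_pos]
        simp [h, Matrix.mulVec_zero, relu]
      · have hpos : 0 < l2norm (u j) := by
          rcases lt_or_eq_of_le (l2norm_nonneg (u j)) with h1 | h1
          · exact h1
          · exact absurd (l2norm_eq_zero h1.symm) h
        simp only [hα', hu', h, if_neg, if_false]
        rw [Matrix.mulVec_smul, Pi.smul_apply, smul_eq_mul,
          relu_mul (inv_nonneg.mpr hpos.le)]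
        field_simp
    refine ⟨_, ⟨α', u', hnorm, rfl⟩, ?_⟩
    have hfitsum : (∑ i, (∑ j, relu ((X.mulVec (u' j)) i) * α' j - y i) ^ 2)
        = (∑ i, (∑ j, relu ((X.mulVec (u j)) i) * α j - y i) ^ 2) := by
      refine Finset.sum_congr rfl fun i _ => ?_
      congr 2
      exact Finset.sum_congr rfl fun j _ => hfit i j
    rw [hfitsum]
    have hpen : β * (∑ j, |α' j|)
        ≤ (β / 2) * (∑ j, ((l2norm (u j)) ^ 2 + (α j) ^ 2)) := by
      have : ∀ j : Fin m, β * |α' j| ≤ (β / 2) * ((l2norm (u j)) ^ 2 + (α j) ^ 2) := by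
        intro j
        by_cases h : u j = 0
        · simp only [hα', h, if_pos]
          have : (0:ℝ) ≤ (l2norm (u j)) ^ 2 + (α j) ^ 2 := by positivity
          simp only [abs_zero, mul_zero]
          positivity
        · simp only [hα', h, if_neg, if_false]
          rw [abs_mul, abs_of_nonneg (l2norm_nonneg (u j))]
          have h2 : l2norm (u j) * |α j| ≤ ((l2norm (u j)) ^ 2 + (α j) ^ 2) / 2 := by
            nlinarith [sq_nonneg (l2norm (u j) - |α j|), sq_abs (α j)]
          nlinarith [hβ.le]
      calc β * (∑ j, |α' j|) = ∑ j, β * |α' j| := by rw [Finset.mul_sum]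
        _ ≤ ∑ j, (β / 2) * ((l2norm (u j)) ^ 2 + (α j) ^ 2) :=
            Finset.sum_le_sum fun j _ => this j
        _ = (β / 2) * (∑ j, ((l2norm (u j)) ^ 2 + (α j) ^ 2)) := by rw [Finset.mul_sum]
    linarith
  · -- every element of the ℓ₁ set dominates an element of the weight-decay set
    rintro c ⟨α, u, hu1, rfl⟩
    classical
    set s : Fin m → ℝ := fun j => Real.sqrt |α j| with hs
    have hs_nonneg : ∀ j, 0 ≤ s j := fun j => Real.sqrt_nonneg _
    have hs_sq : ∀ j, s j ^ 2 = |α j| := fun j => Real.sq_sqrt (abs_nonneg _)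
    set α' : Fin m → ℝ := fun j => if 0 ≤ α j then s j else -(s j) with hα'
    set u' : Fin m → Fin d → ℝ := fun j => s j • u j with hu'
    have hfit : ∀ i j, relu ((X.mulVec (u' j)) i) * α' j
        = relu ((X.mulVec (u j)) i) * α j := by
      intro i j
      simp only [hu', Matrix.mulVec_smul, Pi.smul_apply, smul_eq_mul,
        relu_mul (hs_nonneg j)]
      by_cases h : 0 ≤ α j
      · simp only [hα', h, if_pos]
        have : s j * s j = α j := by
          have := hs_sq j
          rw [abs_of_nonneg h] at this
          nlinarith
        linear_combination relu ((X *ᵥ u j) i) * this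
      · simp only [hα', h, if_neg, if_false]
        have : s j * s j = -(α j) := by
          have := hs_sq j
          rw [abs_of_neg (lt_of_not_ge h)] at this
          nlinarith
        linear_combination (-(relu ((X *ᵥ u j) i))) * this
    refine ⟨_, ⟨α', u', rfl⟩, ?_⟩
    have hfitsum : (∑ i, (∑ j, relu ((X.mulVec (u' j)) i) * α' j - y i) ^ 2)
        = (∑ i, (∑ j, relu ((X.mulVec (u j)) i) * α j - y i) ^ 2) := by
      refine Finset.sum_congr rfl fun i _ => ?_
      congr 2
      exact Finset.sum_congr rfl fun j _ => hfit i j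
    rw [hfitsum]
    have hpen : (β / 2) * (∑ j, ((l2norm (u' j)) ^ 2 + (α' j) ^ 2))
        ≤ β * (∑ j, |α j|) := by
      have key : ∀ j : Fin m,
          (β / 2) * ((l2norm (u' j)) ^ 2 + (α' j) ^ 2) ≤ β * |α j| := by
        intro j
        have h1 : l2norm (u' j) ^ 2 = |α j| * l2norm (u j) ^ 2 := by
          simp only [hu', l2norm_smul, abs_of_nonneg (hs_nonneg j)]
          rw [mul_pow, hs_sq j]
        have h2 : (α' j) ^ 2 = |α j| := by
          by_cases h : 0 ≤ α j
          · simp only [hα', h, if_pos]; exact hs_sq j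
          · simp only [hα', h, if_neg, if_false]
            rw [neg_pow]; simp [hs_sq j]
        have h3 : l2norm (u j) ^ 2 ≤ 1 := by
          have := hu1 j
          nlinarith [l2norm_nonneg (u j)]
        rw [h1, h2]
        have h4 : 0 ≤ |α j| := abs_nonneg _
        nlinarith [mul_nonneg hβ.le (mul_nonneg h4 (sub_nonneg.mpr h3))]
      calc (β / 2) * (∑ j, ((l2norm (u' j)) ^ 2 + (α' j) ^ 2))
          = ∑ j, (β / 2) * ((l2norm (u' j)) ^ 2 + (α' j) ^ 2) := by rw [Finset.mul_sum]
        _ ≤ ∑ j, β * |α j| := Finset.sum_le_sum fun j _ => key j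
        _ = β * (∑ j, |α j|) := by rw [Finset.mul_sum]
    linarith
end

section
/- The number of regions determined by an arrangement of n hyperplanes through the origin in ℝ^r (equivalently, the number of distinct vectors sign(Xu) ∈ {−1,+1}^n over u ∈ ℝ^r with Xu having no zero entries, for X ∈ ℝ^{n×r}) is at most 2 Σ_{k=0}^{r−1} C(n−1, k). -/
/-!
Deletion–restriction. Dropping the first functional `f 0` maps the sign patterns of
`f 0, …, f n` into those of `f 1, …, f n`, and a pattern has two preimages only if it is
realised by some `u` with `f 0 u > 0` and some `v` with `f 0 v < 0`; the segment from `u` to `v`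
then meets `ker (f 0)`, where the pattern is realised by the restricted functionals in one
dimension less. Hence the largest number `C(m, d)` of patterns of `m` functionals in dimension
`≤ d` satisfies `C(n + 1, d) ≤ C(n, d) + C(n, d - 1)`, Pascal's recursion for
`2 ∑_{k < d} (n choose k)`.
-/

open Matrix Finset

lemma Real.sign_mul_add_mul_of_sign_eq {a b x y : ℝ} (ha : 0 < a) (hb : 0 < b) (hx : x ≠ 0)
    (hxy : sign y = sign x) : sign (a * x + b * y) = sign x := by
  rcases hx.lt_or_gt with hx | hx <;> rcases lt_trichotomy y 0 with hy | hy | hy <;>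
    simp [Real.sign_of_neg, Real.sign_of_pos, hx, hy] at hxy ⊢ <;> norm_num at hxy
  · exact Real.sign_of_neg (by nlinarith)
  · exact Real.sign_of_pos (by nlinarith)

theorem Nat.sum_range_succ_choose_succ (m d : ℕ) :
    ∑ k ∈ range (d + 1), (m + 1).choose k =
      ∑ k ∈ range (d + 1), m.choose k + ∑ k ∈ range d, m.choose k := by
  simp only [sum_range_succ' _ d, Nat.choose_succ_succ', sum_add_distrib, Nat.choose_zero_right]
  ring

lemma Matrix.ncard_le_ncard_image_vecTail_add {α : Type*} {n : ℕ} {P : Set (Fin (n + 1) → α)}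
    (hP : P.Finite) {a b : α} (hab : ∀ s ∈ P, s 0 = a ∨ s 0 = b) :
    P.ncard ≤ (vecTail '' P).ncard + {x | vecCons a x ∈ P ∧ vecCons b x ∈ P}.ncard := by
  have hcons (c : α) : Function.Injective (vecCons c : (Fin n → α) → Fin (n + 1) → α) :=
    fun _ _ h => (vecCons_inj.mp h).2
  let A : Set (Fin n → α) := vecCons a ⁻¹' P
  let B : Set (Fin n → α) := vecCons b ⁻¹' P
  have hA : A.Finite := hP.preimage (hcons a).injOn
  have hB : B.Finite := hP.preimage (hcons b).injOn
  have hP_sub : P ⊆ vecCons a '' A ∪ vecCons b '' B := by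
    intro s hs
    have hs' : vecCons (vecHead s) (vecTail s) ∈ P := by rwa [cons_head_tail]
    rcases hab s hs with h | h
    · exact .inl ⟨vecTail s, by rwa [vecHead, h] at hs', by rw [← h]; exact cons_head_tail s⟩
    · exact .inr ⟨vecTail s, by rwa [vecHead, h] at hs', by rw [← h]; exact cons_head_tail s⟩
  have hAB_sub : A ∪ B ⊆ vecTail '' P := by
    rintro x (hx | hx) <;> exact ⟨_, hx, tail_cons _ _⟩
  calc P.ncard ≤ (vecCons a '' A ∪ vecCons b '' B).ncard :=
        Set.ncard_le_ncard hP_sub ((hA.image _).union (hB.image _))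
    _ ≤ (vecCons a '' A).ncard + (vecCons b '' B).ncard := Set.ncard_union_le _ _
    _ = (A ∪ B).ncard + (A ∩ B).ncard := by
      rw [Set.ncard_image_of_injective _ (hcons a), Set.ncard_image_of_injective _ (hcons b),
        Set.ncard_union_add_ncard_inter _ _ hA hB]
    _ ≤ (vecTail '' P).ncard + (A ∩ B).ncard :=
      Nat.add_le_add_right (Set.ncard_le_ncard hAB_sub (hP.image _)) _

section SignPatterns

variable {ι V : Type*} [AddCommGroup V] [Module ℝ V]

def signPatterns (f : ι → V →ₗ[ℝ] ℝ) : Set (ι → ℝ) :=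
  {s | ∃ u : V, (∀ i, f i u ≠ 0) ∧ s = fun i => Real.sign (f i u)}

theorem signPatterns_finite [Finite ι] (f : ι → V →ₗ[ℝ] ℝ) : (signPatterns f).Finite := by
  refine (Set.Finite.pi fun _ : ι => ({-1, 0, 1} : Set ℝ).toFinite).subset ?_
  rintro s ⟨u, -, rfl⟩ i -
  rcases Real.sign_apply_eq (f i u) with h | h | h <;> simp [h]

theorem signPatterns_eq_empty_or_finrank_ker_add_one [FiniteDimensional ℝ V]
    (f : ι → V →ₗ[ℝ] ℝ) (i : ι) :
    signPatterns f = ∅ ∨ Module.finrank ℝ (LinearMap.ker (f i)) + 1 = Module.finrank ℝ V := by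
  rcases eq_or_ne (f i) 0 with h | h
  · exact .inl (Set.eq_empty_of_forall_notMem fun _ ⟨u, hu, _⟩ => hu i (by simp [h]))
  · exact .inr (Module.Dual.finrank_ker_add_one_of_ne_zero h)

variable {n : ℕ}

theorem mem_signPatterns_ker_of_vecCons_mem (f : Fin (n + 1) → V →ₗ[ℝ] ℝ) {x : Fin n → ℝ}
    (hpos : vecCons 1 x ∈ signPatterns f) (hneg : vecCons (-1) x ∈ signPatterns f) :
    x ∈ signPatterns fun i => (f i.succ).comp (LinearMap.ker (f 0)).subtype := by
  obtain ⟨u, hu, hxu⟩ := hpos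
  obtain ⟨v, hv, hxv⟩ := hneg
  have hu0 : 0 < f 0 u := by
    simpa [← congrFun hxu 0] using Real.sign_mul_pos_of_ne_zero _ (hu 0)
  have hv0 : f 0 v < 0 := by
    simpa [← congrFun hxv 0] using Real.sign_mul_pos_of_ne_zero _ (hv 0)
  have hsign (i : Fin n) : Real.sign (f i.succ v) = Real.sign (f i.succ u) := by
    simpa using (congrFun hxv i.succ).symm.trans (congrFun hxu i.succ)
  -- `w` is the point where the segment from `u` to `v` crosses the hyperplane `f 0 = 0`.
  let w := (-f 0 v) • u + f 0 u • v
  have hw : f 0 w = 0 := by simp only [w, map_add, map_smul, smul_eq_mul]; ring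
  have hfw (i : Fin n) : Real.sign (f i.succ w) = Real.sign (f i.succ u) := by
    simpa only [w, map_add, map_smul, smul_eq_mul] using
      Real.sign_mul_add_mul_of_sign_eq (neg_pos.mpr hv0) hu0 (hu i.succ) (hsign i)
  refine ⟨⟨w, hw⟩, fun i h => hu i.succ ?_, ?_⟩
  · rw [← Real.sign_eq_zero_iff, ← hfw i]
    simpa using h
  · funext i
    simpa [hfw i] using congrFun hxu i.succ

theorem ncard_signPatterns_le_add (f : Fin (n + 1) → V →ₗ[ℝ] ℝ) :
    (signPatterns f).ncard ≤ (signPatterns fun i : Fin n => f i.succ).ncard +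
      (signPatterns fun i : Fin n => (f i.succ).comp (LinearMap.ker (f 0)).subtype).ncard := by
  refine (ncard_le_ncard_image_vecTail_add (signPatterns_finite f) (a := 1) (b := -1) ?_).trans
    (add_le_add (Set.ncard_le_ncard ?_ (signPatterns_finite _))
      (Set.ncard_le_ncard ?_ (signPatterns_finite _)))
  · rintro s ⟨u, hu, rfl⟩
    exact (Real.sign_apply_eq_of_ne_zero _ (hu 0)).symm
  · rintro s ⟨s, ⟨u, hu, rfl⟩, rfl⟩
    exact ⟨u, fun i => hu i.succ, rfl⟩
  · exact fun x ⟨hpos, hneg⟩ => mem_signPatterns_ker_of_vecCons_mem f hpos hneg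

theorem ncard_signPatterns_le [FiniteDimensional ℝ V] (f : Fin (n + 1) → V →ₗ[ℝ] ℝ) {d : ℕ}
    (hd : Module.finrank ℝ V ≤ d) :
    (signPatterns f).ncard ≤ 2 * ∑ k ∈ range d, n.choose k := by
  induction n generalizing V d with
  | zero =>
    rcases signPatterns_eq_empty_or_finrank_ker_add_one f 0 with h | h
    · simp [h]
    obtain ⟨d, rfl⟩ : ∃ d', d = d' + 1 := ⟨d - 1, by omega⟩
    calc (signPatterns f).ncard ≤ 1 + 1 := (ncard_signPatterns_le_add f).trans
          (add_le_add (Set.ncard_le_one_of_subsingleton _) (Set.ncard_le_one_of_subsingleton _))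
      _ = 2 * ∑ k ∈ range (d + 1), Nat.choose 0 k := by simp [sum_range_succ']
  | succ m ih =>
    rcases signPatterns_eq_empty_or_finrank_ker_add_one f 0 with h | h
    · simp [h]
    obtain ⟨d, rfl⟩ : ∃ d', d = d' + 1 := ⟨d - 1, by omega⟩
    calc (signPatterns f).ncard ≤ _ + _ := ncard_signPatterns_le_add f
      _ ≤ 2 * ∑ k ∈ range (d + 1), m.choose k + 2 * ∑ k ∈ range d, m.choose k :=
        add_le_add (ih _ hd) (ih _ (by omega))
      _ = 2 * ∑ k ∈ range (d + 1), (m + 1).choose k := by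
        rw [Nat.sum_range_succ_choose_succ]; ring

end SignPatterns

theorem cover_winder_bound_general {n r : ℕ} (hr : 1 ≤ r)
    (X : Matrix (Fin n) (Fin r) ℝ) :
    Set.ncard {s : Fin n → ℝ | ∃ u : Fin r → ℝ, (∀ i, (X.mulVec u) i ≠ 0) ∧
        s = fun i => Real.sign ((X.mulVec u) i)} ≤
      2 * ∑ k ∈ Finset.range r, Nat.choose (n - 1) k := by
  change (signPatterns fun i => (LinearMap.proj i).comp X.mulVecLin).ncard ≤ _
  rcases n with _ | m
  -- `0 - 1 = 0` in `ℕ`, so for `n = 0` the bound is `2`.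
  · obtain ⟨r, rfl⟩ : ∃ r', r = r' + 1 := ⟨r - 1, by omega⟩
    calc _ ≤ 1 := Set.ncard_le_one_of_subsingleton _
      _ ≤ 2 * ∑ k ∈ range (r + 1), Nat.choose (0 - 1) k := by simp [sum_range_succ']
  · exact ncard_signPatterns_le _ (by simp)

/-- Cover–Winder bound: the number of sign patterns `sign(Xu) ∈ {−1,+1}^n` realizable by a
central arrangement of `n` hyperplanes in `ℝ^r` is at most `2 Σ_{k=0}^{r−1} C(n−1,k)`. -/
theorem cover_winder_bound {n r : ℕ} (hr : 1 ≤ r) (hnr : r ≤ n)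
    (X : Matrix (Fin n) (Fin r) ℝ) (hrow : ∀ i, X i ≠ 0) :
    Set.ncard {s : Fin n → ℝ | ∃ u : Fin r → ℝ, (∀ i, (X.mulVec u) i ≠ 0) ∧
        s = fun i => Real.sign ((X.mulVec u) i)} ≤
      2 * ∑ k ∈ Finset.range r, Nat.choose (n - 1) k :=
  cover_winder_bound_general hr X
end

section
/- Let Q_X = {(Xu)_+ : u ∈ ℝ^d, ‖u‖₂ ≤ 1} ⊆ ℝ^n. Then Q_X is a compact set, and it is a finite union of compact convex sets; namely Q_X = ∪_{i=1}^P { D_i X u : ‖u‖₂ ≤ 1, (2D_i − I)Xu ≥ 0 }, where D_1,…,D_P enumerate the diagonal 0/1 matrices Diag(1[Xu ≥ 0]) realizable by some u ∈ ℝ^d. -/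
/-!
Where the activation pattern `D = Diag(1[Xu ≥ 0])` is fixed, the ReLU acts as the linear map `D`,
so `(Xu)_+ = D X u`; the constraint `(2D − I)Xu ≥ 0` says that `u` lies in such a region (with a
tie `x_iᵀu = 0` allowed either way, where both choices give the same value). Each piece is
therefore the linear image of the unit ball cut by a polyhedral cone, hence compact and convex,
and there are at most `2ⁿ` patterns, so `Q_X` is a finite union of compact sets.
-/

open Matrix

section UnitBall

variable {d : ℕ}

theorem l2norm_eq_norm (u : Fin d → ℝ) :
    l2norm u = ‖(EuclideanSpace.equiv (Fin d) ℝ).symm u‖ := by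
  simp [l2norm, EuclideanSpace.norm_eq, Real.norm_eq_abs, sq_abs]

theorem setOf_l2norm_le_eq_preimage (r : ℝ) :
    {u : Fin d → ℝ | l2norm u ≤ r} =
      (EuclideanSpace.equiv (Fin d) ℝ).symm ⁻¹' Metric.closedBall 0 r := by
  ext u
  simp [l2norm_eq_norm]

theorem isCompact_setOf_l2norm_le (r : ℝ) : IsCompact {u : Fin d → ℝ | l2norm u ≤ r} := by
  rw [setOf_l2norm_le_eq_preimage]
  exact (EuclideanSpace.equiv (Fin d) ℝ).symm.toHomeomorph.isCompact_preimage.mpr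
    (isCompact_closedBall 0 r)

theorem convex_setOf_l2norm_le (r : ℝ) : Convex ℝ {u : Fin d → ℝ | l2norm u ≤ r} := by
  rw [setOf_l2norm_le_eq_preimage]
  exact (convex_closedBall 0 r).linear_preimage
    (EuclideanSpace.equiv (Fin d) ℝ).symm.toLinearEquiv.toLinearMap

variable {m k : ℕ} (A : (Fin d → ℝ) →ₗ[ℝ] (Fin m → ℝ)) (B : (Fin d → ℝ) →ₗ[ℝ] (Fin k → ℝ))

theorem isCompact_image_l2ball_inter_cone :
    IsCompact (B '' ({u | l2norm u ≤ 1} ∩ A ⁻¹' Set.Ici 0)) :=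
  ((isCompact_setOf_l2norm_le 1).inter_right
    (isClosed_Ici.preimage A.continuous_of_finiteDimensional)).image
    B.continuous_of_finiteDimensional

theorem convex_image_l2ball_inter_cone :
    Convex ℝ (B '' ({u | l2norm u ≤ 1} ∩ A ⁻¹' Set.Ici 0)) :=
  ((convex_setOf_l2norm_le 1).inter ((convex_Ici 0).linear_preimage A)).linear_image B

end UnitBall

section ActivationPattern

variable {n : ℕ}

theorem two_smul_diagonal_sub_one_mulVec (χ v : Fin n → ℝ) (i : Fin n) :
    (((2 : ℝ) • diagonal χ - 1) *ᵥ v) i = (2 * χ i - 1) * v i := by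
  simp only [sub_mulVec, smul_mulVec, one_mulVec, mulVec_diagonal, Pi.sub_apply,
    Pi.smul_apply, smul_eq_mul]
  ring

theorem mul_eq_relu_of_sign_consistent {c t : ℝ} (hc : c = 0 ∨ c = 1)
    (h : 0 ≤ (2 * c - 1) * t) : c * t = relu t := by
  rcases hc with rfl | rfl
  · simp only [relu, zero_mul]; exact (max_eq_right (by linarith)).symm
  · simp only [relu, one_mul]; exact (max_eq_left (by linarith)).symm

theorem diagonal_activation_mulVec_of_sign_consistent (v₀ v : Fin n → ℝ)
    (h : ∀ i, 0 ≤ (((2 : ℝ) • diagonal (fun i => if 0 ≤ v₀ i then (1 : ℝ) else 0) - 1) *ᵥ v) i) :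
    diagonal (fun i => if 0 ≤ v₀ i then (1 : ℝ) else 0) *ᵥ v = fun i => relu (v i) := by
  funext i
  have hi := h i
  rw [two_smul_diagonal_sub_one_mulVec] at hi
  rw [mulVec_diagonal]
  exact mul_eq_relu_of_sign_consistent (by split_ifs <;> simp) hi

theorem activation_sign_consistent (v : Fin n → ℝ) (i : Fin n) :
    0 ≤ (((2 : ℝ) • diagonal (fun i => if 0 ≤ v i then (1 : ℝ) else 0) - 1) *ᵥ v) i := by
  rw [two_smul_diagonal_sub_one_mulVec]
  split_ifs <;> linarith

theorem finite_range_diagonal_activation {d : ℕ} (X : Matrix (Fin n) (Fin d) ℝ) :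
    (Set.range fun u => diagonal (fun i => if 0 ≤ (X *ᵥ u) i then (1 : ℝ) else 0)).Finite :=
  (Set.finite_range fun s : Fin n → Bool => diagonal fun i => if s i then (1 : ℝ) else 0).subset
    (Set.range_subset_iff.mpr fun u => ⟨fun i => decide (0 ≤ (X *ᵥ u) i), by simp⟩)

end ActivationPattern

/-- The rectified ellipsoid `Q_X = {(Xu)_+ : ‖u‖₂ ≤ 1}` is compact and is the union, over the
finitely many realizable activation patterns `D_i = Diag(1[Xu ≥ 0])`, of the compact convex
sets `{D_i X u : ‖u‖₂ ≤ 1, (2D_i − I)Xu ≥ 0}`. -/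
theorem rectified_ellipsoid_decomposition {n d : ℕ} (X : Matrix (Fin n) (Fin d) ℝ) :
    let Q : Set (Fin n → ℝ) :=
      {w | ∃ u : Fin d → ℝ, l2norm u ≤ 1 ∧ w = fun i => relu ((X.mulVec u) i)}
    let 𝒟 : Set (Matrix (Fin n) (Fin n) ℝ) :=
      {D | ∃ u : Fin d → ℝ,
        D = Matrix.diagonal (fun i => if 0 ≤ (X.mulVec u) i then (1 : ℝ) else 0)}
    let piece : Matrix (Fin n) (Fin n) ℝ → Set (Fin n → ℝ) := fun D =>
      {w | ∃ u : Fin d → ℝ, l2norm u ≤ 1 ∧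
        (∀ i, 0 ≤ (((2 : ℝ) • D - 1).mulVec (X.mulVec u)) i) ∧
        w = D.mulVec (X.mulVec u)}
    IsCompact Q ∧ 𝒟.Finite ∧ Q = ⋃ D ∈ 𝒟, piece D ∧
      ∀ D ∈ 𝒟, IsCompact (piece D) ∧ Convex ℝ (piece D) := by
  intro Q 𝒟 piece
  have hfin : 𝒟.Finite :=
    (finite_range_diagonal_activation X).subset fun D ⟨u, hD⟩ => ⟨u, hD.symm⟩
  have hpiece : ∀ D, piece D = (D.mulVecLin ∘ₗ X.mulVecLin) ''
      ({u | l2norm u ≤ 1} ∩ (((2 : ℝ) • D - 1).mulVecLin ∘ₗ X.mulVecLin) ⁻¹' Set.Ici 0) := by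
    intro D
    ext w
    constructor
    · rintro ⟨u, hu, hsign, rfl⟩
      exact ⟨u, ⟨hu, hsign⟩, rfl⟩
    · rintro ⟨u, ⟨hu, hsign⟩, rfl⟩
      exact ⟨u, hu, hsign, rfl⟩
  have hQ : Q = ⋃ D ∈ 𝒟, piece D := by
    ext w
    simp only [Q, piece, 𝒟, Set.mem_iUnion, Set.mem_ofPred_eq, exists_prop]
    constructor
    · rintro ⟨u, hu, rfl⟩
      exact ⟨_, ⟨u, rfl⟩, u, hu, activation_sign_consistent _,
        (diagonal_activation_mulVec_of_sign_consistent _ _ (activation_sign_consistent _)).symm⟩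
    · rintro ⟨_, ⟨u₀, rfl⟩, u, hu, hsign, rfl⟩
      exact ⟨u, hu, diagonal_activation_mulVec_of_sign_consistent _ _ hsign⟩
  have hcompact : ∀ D, IsCompact (piece D) := fun D =>
    hpiece D ▸ isCompact_image_l2ball_inter_cone _ _
  refine ⟨hQ ▸ hfin.isCompact_biUnion fun D _ => hcompact D, hfin, hQ, fun D _ =>
    ⟨hcompact D, hpiece D ▸ convex_image_l2ball_inter_cone _ _⟩⟩
end

section
/- Let D ∈ ℝ^{n×n} be a 0/1 diagonal matrix and X ∈ ℝ^{n×d}. If the set {u : ‖u‖₂ < 1, (2D − I)Xu > 0} is nonempty (strict feasibility), then max over u with ‖u‖₂ ≤ 1, D X u ≥ 0, (I − D)Xu ≤ 0 of v^T D X u equals min over α, β ∈ ℝ^n with α, β ≥ 0 of ‖X^T D (v + α + β) − X^T β‖₂. -/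
/-!
Both sides equal `‖p‖`, where `p` is the metric projection of `c = XᵀDv` onto the cone
`C = {u | (2D - I)Xu ≥ 0}`, the inner dual of the cone `K` generated by the rows of `(2D - I)X`.
Because `D` is a 0/1 diagonal matrix, the dual vectors `XᵀD(v + α + β) - Xᵀβ` are exactly the points
of `c + K`. Projecting onto a closed convex cone gives `⟪c - p, p⟫ = 0` and, by the bipolar
theorem, `p - c ∈ closure K`. Hence `u = p / ‖p‖` attains `‖p‖` in the primal, weak duality
`⟪c, u⟫ ≤ ⟪c + w, u⟫ ≤ ‖c + w‖` bounds every primal value by every dual one, and `w` close to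
`p - c` brings `‖c + w‖` arbitrarily close to `‖p‖`.
-/

open Matrix

open Set WithLp
open scoped RealInnerProductSpace

lemma csSup_eq_csInf_of_mem_of_forall_le_of_forall_lt_add {P Q : Set ℝ} {m : ℝ} (hm : m ∈ P)
    (hPQ : ∀ x ∈ P, ∀ y ∈ Q, x ≤ y) (hQ : ∀ ε > 0, ∃ y ∈ Q, y < m + ε) :
    sSup P = sInf Q := by
  have hP : IsGreatest P m := ⟨hm, fun x hx => le_of_forall_pos_lt_add fun ε hε =>
    let ⟨y, hy, hlt⟩ := hQ ε hε; (hPQ x hx y hy).trans_lt hlt⟩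
  have hQm : IsGLB Q m := ⟨fun y hy => hPQ m hm y hy, fun b hb => le_of_forall_pos_lt_add
    fun ε hε => let ⟨y, hy, hlt⟩ := hQ ε hε; (hb hy).trans_lt hlt⟩
  obtain ⟨y, hy, -⟩ := hQ 1 one_pos
  rw [hP.csSup_eq, hQm.csInf_eq ⟨y, hy⟩]

namespace ProperCone

variable {E : Type*} [NormedAddCommGroup E] [InnerProductSpace ℝ E] [CompleteSpace E]

lemma innerDual_closure (s : Set E) : innerDual (closure s) = innerDual s := by
  refine le_antisymm (innerDual_le_innerDual subset_closure) fun y hy => ?_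
  have hclosed : IsClosed {x : E | 0 ≤ ⟪x, y⟫} :=
    isClosed_le continuous_const (continuous_id.inner continuous_const)
  exact fun x hx => closure_minimal (fun x hx => hy hx) hclosed hx

lemma innerDual_hull (s : Set E) : innerDual (PointedCone.hull ℝ s : Set E) = innerDual s :=
  toPointedCone_injective (PointedCone.dual_hull s)

/-- Moreau decomposition: `p` is the metric projection of `c` onto `innerDual K`, and `p - c`
lies in the bipolar `closure K`. -/
lemma exists_mem_innerDual_inner_eq_and_sub_mem_closure (K : PointedCone ℝ E) (c : E) :
    ∃ p ∈ innerDual (K : Set E), ⟪c, p⟫ = ‖p‖ ^ 2 ∧ p - c ∈ closure (K : Set E) := by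
  set C := innerDual (K : Set E)
  obtain ⟨p, hpC, hproj⟩ := exists_norm_eq_iInf_of_complete_convex ⟨0, C.zero_mem⟩
    C.isClosed.isComplete C.convex c
  have hvar := (norm_eq_iInf_iff_real_inner_le_zero C.convex hpC).1 hproj
  have horth : ⟪c - p, p⟫ = 0 := by
    have h0 := hvar 0 C.zero_mem
    have h2 := hvar ((2 : ℝ) • p) (C.smul_mem hpC zero_le_two)
    rw [zero_sub, inner_neg_right] at h0
    rw [two_smul, add_sub_cancel_right] at h2
    linarith
  refine ⟨p, hpC, ?_, ?_⟩
  · rw [inner_sub_left, real_inner_self_eq_norm_sq] at horth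
    linarith
  · have hbipolar : (innerDual (innerDual (closure (K : Set E)) : Set E) : Set E) =
        closure (K : Set E) :=
      congrArg SetLike.coe (innerDual_innerDual ⟨K.closure, isClosed_closure⟩)
    rw [← hbipolar, innerDual_closure]
    intro u hu
    have := hvar (u + p) (C.add_mem hu hpC)
    rw [add_sub_cancel_right] at this
    show 0 ≤ ⟪u, p - c⟫
    rw [real_inner_comm, ← neg_sub, inner_neg_left]
    linarith

theorem sSup_inner_innerDual_eq_sInf_norm_add (K : PointedCone ℝ E) (c : E) :
    sSup {x | ∃ u ∈ innerDual (K : Set E), ‖u‖ ≤ 1 ∧ x = ⟪c, u⟫} =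
      sInf {x | ∃ w ∈ K, x = ‖c + w‖} := by
  obtain ⟨p, hpC, hcp, hpc⟩ := exists_mem_innerDual_inner_eq_and_sub_mem_closure K c
  refine csSup_eq_csInf_of_mem_of_forall_le_of_forall_lt_add (m := ‖p‖) ?_ ?_ ?_
  · refine ⟨‖p‖⁻¹ • p, (innerDual _).smul_mem hpC (by positivity), ?_, ?_⟩
    · rw [norm_smul, norm_inv, norm_norm]
      exact inv_mul_le_one
    · rw [real_inner_smul_right, hcp, sq, ← mul_assoc, inv_mul_mul_self]
  · rintro _ ⟨u, hu, hu1, rfl⟩ _ ⟨w, hw, rfl⟩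
    calc ⟪c, u⟫ ≤ ⟪c, u⟫ + ⟪w, u⟫ := le_add_of_nonneg_right (hu hw)
      _ = ⟪c + w, u⟫ := (inner_add_left c w u).symm
      _ ≤ ‖c + w‖ * ‖u‖ := real_inner_le_norm _ _
      _ ≤ ‖c + w‖ := mul_le_of_le_one_right (norm_nonneg _) hu1
  · intro ε hε
    obtain ⟨w, hwK, hw⟩ := Metric.mem_closure_iff.1 hpc ε hε
    refine ⟨_, ⟨w, hwK, rfl⟩, ?_⟩
    calc ‖c + w‖ = ‖p + (w - (p - c))‖ := by congr 1; abel
      _ ≤ ‖p‖ + dist (p - c) w := by rw [dist_comm, dist_eq_norm]; exact norm_add_le _ _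
      _ < ‖p‖ + ε := by gcongr

end ProperCone

lemma l2norm_eq_norm_toLp {d : ℕ} (x : Fin d → ℝ) : l2norm x = ‖toLp 2 x‖ := by
  simp [l2norm, EuclideanSpace.norm_eq]

lemma dotProduct_mulVec_eq_inner_toLp {m n : Type*} [Fintype m] [Fintype n] (v : m → ℝ)
    (B : Matrix m n ℝ) (u : n → ℝ) : v ⬝ᵥ (B *ᵥ u) = ⟪toLp 2 (Bᵀ *ᵥ v), toLp 2 u⟫ := by
  simp [EuclideanSpace.inner_toLp_toLp, dotProduct_mulVec, mulVec_transpose, dotProduct_comm]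

namespace Matrix

noncomputable def rowCone {m n : Type*} (A : Matrix m n ℝ) : PointedCone ℝ (EuclideanSpace ℝ n) :=
  PointedCone.hull ℝ (range fun i => toLp 2 (A i))

lemma toLp_mem_innerDual_rowCone_iff {m n : Type*} [Fintype n] (A : Matrix m n ℝ) (u : n → ℝ) :
    toLp 2 u ∈ ProperCone.innerDual (A.rowCone : Set (EuclideanSpace ℝ n)) ↔
      ∀ i, 0 ≤ (A *ᵥ u) i := by
  simp [rowCone, ProperCone.innerDual_hull, EuclideanSpace.inner_toLp_toLp, mulVec,
    dotProduct_comm]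

lemma mem_rowCone_iff {m n : Type*} [Fintype m] (A : Matrix m n ℝ) (w : EuclideanSpace ℝ n) :
    w ∈ A.rowCone ↔ ∃ l : m → ℝ, (∀ i, 0 ≤ l i) ∧ toLp 2 (Aᵀ *ᵥ l) = w := by
  have hsum (l : m → ℝ) : ∑ i, l i • toLp 2 (A i) = toLp 2 (Aᵀ *ᵥ l) := by
    ext j
    simp [mulVec, dotProduct, Finset.sum_apply, mul_comm]
  rw [rowCone, Submodule.mem_span_range_iff_exists_fun]
  constructor
  · rintro ⟨l, rfl⟩
    exact ⟨fun i => l i, fun i => (l i).2, (hsum _).symm⟩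
  · rintro ⟨l, hl, rfl⟩
    exact ⟨fun i => ⟨l i, hl i⟩, hsum l⟩

end Matrix

section ZeroOneDiagonal

variable {ι : Type*} [Fintype ι] [DecidableEq ι] {dd : ι → ℝ}

lemma nonneg_diagonal_mulVec_and_iff (hdd : ∀ i, dd i = 0 ∨ dd i = 1) (y : ι → ℝ) :
    ((∀ i, 0 ≤ (diagonal dd *ᵥ y) i) ∧ ∀ i, ((1 - diagonal dd) *ᵥ y) i ≤ 0) ↔
      ∀ i, 0 ≤ (diagonal (fun i => 2 * dd i - 1) *ᵥ y) i := by
  simp only [← forall_and, sub_mulVec, one_mulVec, Pi.sub_apply, mulVec_diagonal]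
  refine forall_congr' fun i => ?_
  rcases hdd i with h | h <;> simp [h]

lemma transpose_mulVec_diagonal_add_add_sub {k : Type*} [Fintype k] (X : Matrix ι k ℝ)
    {v a b l : ι → ℝ} (h : ∀ i, dd i * (a i + b i) - b i = (2 * dd i - 1) * l i) :
    Xᵀ *ᵥ (diagonal dd *ᵥ fun i => v i + a i + b i) - Xᵀ *ᵥ b =
      Xᵀ *ᵥ (diagonal dd *ᵥ v) + (diagonal (fun i => 2 * dd i - 1) * X)ᵀ *ᵥ l := by
  rw [transpose_mul, diagonal_transpose, ← mulVec_mulVec, ← mulVec_sub, ← mulVec_add]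
  congr 1
  ext i
  simp only [mulVec_diagonal, Pi.sub_apply, Pi.add_apply]
  linarith [h i]

variable {d : ℕ} (X : Matrix ι (Fin d) ℝ) (v : ι → ℝ)

lemma setOf_primal_eq_innerDual_rowCone (hdd : ∀ i, dd i = 0 ∨ dd i = 1) :
    {c : ℝ | ∃ u : Fin d → ℝ, l2norm u ≤ 1 ∧
        (∀ i, 0 ≤ ((diagonal dd).mulVec (X.mulVec u)) i) ∧
        (∀ i, ((1 - diagonal dd).mulVec (X.mulVec u)) i ≤ 0) ∧
        c = ∑ i, v i * ((diagonal dd).mulVec (X.mulVec u)) i} =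
      {x | ∃ u ∈ ProperCone.innerDual ((diagonal (fun i => 2 * dd i - 1) * X).rowCone : Set _),
        ‖u‖ ≤ 1 ∧ x = ⟪toLp 2 (Xᵀ *ᵥ (diagonal dd *ᵥ v)), u⟫} := by
  have hobj (u : Fin d → ℝ) : ∑ i, v i * (diagonal dd *ᵥ (X *ᵥ u)) i =
      ⟪toLp 2 (Xᵀ *ᵥ (diagonal dd *ᵥ v)), toLp 2 u⟫ := by
    rw [← dotProduct, mulVec_mulVec, dotProduct_mulVec_eq_inner_toLp, transpose_mul,
      diagonal_transpose, ← mulVec_mulVec]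
  have hcone (u : Fin d → ℝ) :
      toLp 2 u ∈ ProperCone.innerDual ((diagonal (fun i => 2 * dd i - 1) * X).rowCone : Set _) ↔
        (∀ i, 0 ≤ (diagonal dd *ᵥ (X *ᵥ u)) i) ∧ ∀ i, ((1 - diagonal dd) *ᵥ (X *ᵥ u)) i ≤ 0 := by
    rw [toLp_mem_innerDual_rowCone_iff, ← mulVec_mulVec, nonneg_diagonal_mulVec_and_iff hdd]
  ext x
  constructor
  · rintro ⟨u, hu1, hD, h1D, rfl⟩
    exact ⟨toLp 2 u, (hcone u).2 ⟨hD, h1D⟩, (l2norm_eq_norm_toLp u) ▸ hu1, hobj u⟩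
  · rintro ⟨u, hu, hu1, rfl⟩
    obtain ⟨hD, h1D⟩ := (hcone (ofLp u)).1 hu
    exact ⟨ofLp u, (l2norm_eq_norm_toLp _).trans_le hu1, hD, h1D, (hobj (ofLp u)).symm⟩

lemma setOf_dual_eq_norm_add_rowCone (hdd : ∀ i, dd i = 0 ∨ dd i = 1) :
    {c : ℝ | ∃ a b : ι → ℝ, (∀ i, 0 ≤ a i) ∧ (∀ i, 0 ≤ b i) ∧
        c = l2norm (Xᵀ.mulVec ((diagonal dd).mulVec (fun i => v i + a i + b i)) - Xᵀ.mulVec b)} =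
      {x | ∃ w ∈ (diagonal (fun i => 2 * dd i - 1) * X).rowCone,
        x = ‖toLp 2 (Xᵀ *ᵥ (diagonal dd *ᵥ v)) + w‖} := by
  -- `(α, β) ↦ Dα + (I - D)β` maps dual feasible pairs onto `0 ≤ λ`, and `λ ↦ (λ, λ)` goes back.
  ext x
  simp only [mem_ofPred_eq, mem_rowCone_iff]
  constructor
  · rintro ⟨a, b, ha, hb, rfl⟩
    refine ⟨_, ⟨fun i => dd i * a i + (1 - dd i) * b i, fun i => ?_, rfl⟩, ?_⟩
    · rcases hdd i with h | h <;> simp [h, ha i, hb i]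
    · rw [l2norm_eq_norm_toLp, ← toLp_add, transpose_mulVec_diagonal_add_add_sub]
      intro i
      rcases hdd i with h | h <;> norm_num [h]
  · rintro ⟨_, ⟨l, hl, rfl⟩, rfl⟩
    refine ⟨l, l, hl, hl, ?_⟩
    rw [l2norm_eq_norm_toLp, ← toLp_add, transpose_mulVec_diagonal_add_add_sub]
    intro i
    ring

end ZeroOneDiagonal

theorem cone_program_strong_duality_general {n d : ℕ} (X : Matrix (Fin n) (Fin d) ℝ)
    (v : Fin n → ℝ) (dd : Fin n → ℝ) (hdd : ∀ i, dd i = 0 ∨ dd i = 1)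
    (D : Matrix (Fin n) (Fin n) ℝ) (hD : D = Matrix.diagonal dd) :
    sSup {c : ℝ | ∃ u : Fin d → ℝ, l2norm u ≤ 1 ∧
        (∀ i, 0 ≤ (D.mulVec (X.mulVec u)) i) ∧
        (∀ i, ((1 - D).mulVec (X.mulVec u)) i ≤ 0) ∧
        c = ∑ i, v i * (D.mulVec (X.mulVec u)) i} =
    sInf {c : ℝ | ∃ a b : Fin n → ℝ, (∀ i, 0 ≤ a i) ∧ (∀ i, 0 ≤ b i) ∧
        c = l2norm (Xᵀ.mulVec (D.mulVec (fun i => v i + a i + b i)) - Xᵀ.mulVec b)} := by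
  subst hD
  rw [setOf_primal_eq_innerDual_rowCone X v hdd, setOf_dual_eq_norm_add_rowCone X v hdd]
  exact ProperCone.sSup_inner_innerDual_eq_sInf_norm_add _ _

/-- Lemma 2 (Appendix A.10): strong second-order-cone duality for maximizing a linear
functional over the intersection of the unit ball with a hyperplane arrangement cone,
under strict feasibility. -/
theorem cone_program_strong_duality {n d : ℕ} (X : Matrix (Fin n) (Fin d) ℝ)
    (v : Fin n → ℝ) (dd : Fin n → ℝ) (hdd : ∀ i, dd i = 0 ∨ dd i = 1)
    (D : Matrix (Fin n) (Fin n) ℝ) (hD : D = Matrix.diagonal dd)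
    (hfeas : ∃ u : Fin d → ℝ, l2norm u < 1 ∧
      ∀ i, 0 < (((2 : ℝ) • D - 1).mulVec (X.mulVec u)) i) :
    sSup {c : ℝ | ∃ u : Fin d → ℝ, l2norm u ≤ 1 ∧
        (∀ i, 0 ≤ (D.mulVec (X.mulVec u)) i) ∧
        (∀ i, ((1 - D).mulVec (X.mulVec u)) i ≤ 0) ∧
        c = ∑ i, v i * (D.mulVec (X.mulVec u)) i} =
    sInf {c : ℝ | ∃ a b : Fin n → ℝ, (∀ i, 0 ≤ a i) ∧ (∀ i, 0 ≤ b i) ∧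
        c = l2norm (Xᵀ.mulVec (D.mulVec (fun i => v i + a i + b i)) - Xᵀ.mulVec b)} :=
  cone_program_strong_duality_general X v dd hdd D hD
end

section
/- For X ∈ ℝ^{n×d} and v ∈ ℝ^n, max over u with ‖u‖₂ ≤ 1 of v^T (Xu)_+ equals the maximum over all realizable 0/1 diagonal matrices D_i = Diag(1[Xu ≥ 0]) of the maximum over u with ‖u‖₂ ≤ 1 and (2D_i − I)Xu ≥ 0 of v^T D_i X u. -/
open Matrix

/-- Decomposition of the nonconvex ReLU maximization over the unit ball into finitely many
convex maximizations over the realizable hyperplane arrangement regions. -/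
theorem relu_max_decomposition {n d : ℕ} (X : Matrix (Fin n) (Fin d) ℝ) (v : Fin n → ℝ) :
    sSup {c : ℝ | ∃ u : Fin d → ℝ, l2norm u ≤ 1 ∧
        c = ∑ i, v i * relu ((X.mulVec u) i)} =
    sSup {c : ℝ | ∃ D : Matrix (Fin n) (Fin n) ℝ,
        (∃ u₀ : Fin d → ℝ,
          D = Matrix.diagonal (fun i => if 0 ≤ (X.mulVec u₀) i then (1 : ℝ) else 0)) ∧
        ∃ u : Fin d → ℝ, l2norm u ≤ 1 ∧
          (∀ i, 0 ≤ (((2 : ℝ) • D - 1).mulVec (X.mulVec u)) i) ∧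
          c = ∑ i, v i * (D.mulVec (X.mulVec u)) i} := by
  congr 1
  ext c
  simp only [Set.mem_setOf_eq]
  constructor
  · rintro ⟨u, hu, rfl⟩
    refine ⟨Matrix.diagonal (fun i => if 0 ≤ (X.mulVec u) i then (1 : ℝ) else 0),
      ⟨u, rfl⟩, u, hu, ?_, ?_⟩
    · intro i
      simp only [Matrix.sub_mulVec, Matrix.smul_mulVec, Matrix.one_mulVec,
        Pi.sub_apply, Pi.smul_apply, Matrix.mulVec_diagonal, smul_eq_mul]
      by_cases h : 0 ≤ (X.mulVec u) i
      · simp [h]; linarith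
      · simp [h]; linarith [not_le.mp h]
    · refine Finset.sum_congr rfl fun i _ => ?_
      simp only [Matrix.mulVec_diagonal, relu]
      by_cases h : 0 ≤ (X.mulVec u) i
      · simp [h, max_eq_left h]
      · simp [h, max_eq_right (le_of_lt (not_le.mp h))]
  · rintro ⟨D, ⟨u₀, rfl⟩, u, hu, hcon, rfl⟩
    refine ⟨u, hu, Finset.sum_congr rfl fun i _ => ?_⟩
    have hi := hcon i
    simp only [Matrix.sub_mulVec, Matrix.smul_mulVec, Matrix.one_mulVec,
      Pi.sub_apply, Pi.smul_apply, Matrix.mulVec_diagonal, smul_eq_mul] at hi ⊢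
    simp only [relu]
    by_cases h : 0 ≤ (X.mulVec u₀) i
    · simp only [h, if_true, one_mul] at hi ⊢
      rw [max_eq_left]; linarith
    · simp only [h, if_false, zero_mul] at hi ⊢
      rw [max_eq_right]; linarith
end

section
/- Let D_1,…,D_P be the realizable activation diagonal matrices of X and let {v_i*, w_i*} be feasible for the convex program: (2D_i − I)Xv_i ≥ 0, (2D_i − I)Xw_i ≥ 0 for all i. Define, for each i with v_i* ≠ 0, a neuron (u, α) = (v_i*/√‖v_i*‖₂, √‖v_i*‖₂), and for each i with w_i* ≠ 0, (u, α) = (w_i*/√‖w_i*‖₂, −√‖w_i*‖₂). Then the resulting network output Σ (Xu)_+ α equals Σ_i D_i X (v_i* − w_i*), and its regularized cost (1/2)‖Σ(Xu)_+α − y‖₂² + (β/2)Σ(‖u‖₂² + α²) equals (1/2)‖Σ_i D_i X(v_i* − w_i*) − y‖₂² + β Σ_i (‖v_i*‖₂ + ‖w_i*‖₂). -/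
open Matrix

lemma norm_term (L : ℝ) (hL : 0 ≤ L) :
    ((Real.sqrt L)⁻¹)^2 * L^2 + (Real.sqrt L)^2 = 2 * L := by
  rcases eq_or_lt_of_le hL with h | h
  · simp [← h]
  · rw [Real.sq_sqrt hL, ← Real.sqrt_inv, Real.sq_sqrt (by positivity)]
    field_simp
    ring

lemma neuron_eq {n d : ℕ} (X : Matrix (Fin n) (Fin d) ℝ) (dd : Fin n → ℝ)
    (hdd : ∀ k, dd k = 0 ∨ dd k = 1) (v : Fin d → ℝ)
    (hv : ∀ k, 0 ≤ (((2:ℝ) • (Matrix.diagonal dd) - 1).mulVec (X.mulVec v)) k)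
    (k : Fin n) :
    relu ((X.mulVec ((Real.sqrt (l2norm v))⁻¹ • v)) k) * Real.sqrt (l2norm v)
      = ((Matrix.diagonal dd).mulVec (X.mulVec v)) k := by
  set L := l2norm v with hLdef
  have hcon := hv k
  rw [Matrix.sub_mulVec, Matrix.one_mulVec, Matrix.smul_mulVec] at hcon
  simp only [Pi.sub_apply, Pi.smul_apply, smul_eq_mul, Matrix.mulVec_diagonal] at hcon
  have hDk : ((Matrix.diagonal dd).mulVec (X.mulVec v)) k = dd k * (X.mulVec v) k :=
    Matrix.mulVec_diagonal dd (X.mulVec v) k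
  by_cases hL : L = 0
  · have hv0 : v = 0 := by
      have hnn : 0 ≤ ∑ i, v i ^ 2 := Finset.sum_nonneg fun i _ => sq_nonneg _
      have hsum : (∑ i, v i ^ 2) = 0 := (Real.sqrt_eq_zero hnn).mp hL
      funext j
      have := (Finset.sum_eq_zero_iff_of_nonneg (fun i _ => sq_nonneg (v i))).mp hsum j (Finset.mem_univ j)
      exact pow_eq_zero_iff (two_ne_zero) |>.mp this
    subst hv0
    simp [relu, Matrix.mulVec_zero, hDk]
  · have hLpos : 0 < L := lt_of_le_of_ne (l2norm_nonneg v) (Ne.symm hL)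
    have hs : 0 < Real.sqrt L := Real.sqrt_pos.mpr hLpos
    rw [Matrix.mulVec_smul]
    have : ((Real.sqrt L)⁻¹ • X.mulVec v) k = (Real.sqrt L)⁻¹ * (X.mulVec v) k := rfl
    rw [this]
    have hrelu : relu ((Real.sqrt L)⁻¹ * (X.mulVec v) k)
        = (Real.sqrt L)⁻¹ * relu ((X.mulVec v) k) := by
      unfold relu
      rw [mul_max_of_nonneg _ _ (by positivity)]
      simp
    rw [hrelu, mul_comm ((Real.sqrt L)⁻¹) _, mul_assoc, inv_mul_cancel₀ (ne_of_gt hs), mul_one, hDk]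
    rcases hdd k with h0 | h1
    · rw [h0] at hcon ⊢
      simp only [mul_zero, zero_mul, zero_sub, Left.nonneg_neg_iff] at hcon ⊢
      unfold relu
      rw [max_eq_right hcon]
    · rw [h1] at hcon ⊢
      simp only [mul_one, one_mul] at hcon ⊢
      have : 0 ≤ (X.mulVec v) k := by linarith
      unfold relu
      rw [max_eq_left this]

/-- Feasible-direction half of Theorem 1: from a feasible point `{v_i, w_i}` of the convex
program one constructs neurons `(v_i/√‖v_i‖₂, √‖v_i‖₂)` and `(w_i/√‖w_i‖₂, −√‖w_i‖₂)`;
the resulting network output equals `Σ_i D_i X (v_i − w_i)` and its weight-decay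
regularized cost equals the convex program objective. -/
theorem convex_program_feasible_construction {n d P : ℕ}
    (X : Matrix (Fin n) (Fin d) ℝ) (y : Fin n → ℝ) (β : ℝ) (hβ : 0 < β)
    (D : Fin P → Matrix (Fin n) (Fin n) ℝ)
    (hD : ∀ i, ∃ dd : Fin n → ℝ, D i = Matrix.diagonal dd ∧ ∀ k, dd k = 0 ∨ dd k = 1)
    (hDreal : ∀ i, ∃ u : Fin d → ℝ,
      D i = Matrix.diagonal (fun k => if 0 ≤ (X.mulVec u) k then (1 : ℝ) else 0))
    (v w : Fin P → Fin d → ℝ)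
    (hv : ∀ i k, 0 ≤ (((2 : ℝ) • D i - 1).mulVec (X.mulVec (v i))) k)
    (hw : ∀ i k, 0 ≤ (((2 : ℝ) • D i - 1).mulVec (X.mulVec (w i))) k) :
    let sv : Fin P → ℝ := fun i => Real.sqrt (l2norm (v i))
    let sw : Fin P → ℝ := fun i => Real.sqrt (l2norm (w i))
    let net : Fin n → ℝ := fun k =>
      ∑ i, (relu ((X.mulVec ((sv i)⁻¹ • v i)) k) * sv i
            - relu ((X.mulVec ((sw i)⁻¹ • w i)) k) * sw i)
    (∀ k, net k = ∑ i, ((D i).mulVec (X.mulVec (v i - w i))) k) ∧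
    (1 / 2) * (∑ k, (net k - y k) ^ 2)
        + (β / 2) * (∑ i, ((l2norm ((sv i)⁻¹ • v i)) ^ 2 + (sv i) ^ 2
            + (l2norm ((sw i)⁻¹ • w i)) ^ 2 + (sw i) ^ 2)) =
      (1 / 2) * (∑ k, (∑ i, ((D i).mulVec (X.mulVec (v i - w i))) k - y k) ^ 2)
        + β * (∑ i, (l2norm (v i) + l2norm (w i))) := by
  intro sv sw net
  have key1 : ∀ i k, relu ((X.mulVec ((sv i)⁻¹ • v i)) k) * sv i
      = ((D i).mulVec (X.mulVec (v i))) k := by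
    intro i k
    obtain ⟨dd, hDi, hdd⟩ := hD i
    rw [hDi]
    exact neuron_eq X dd hdd (v i) (fun k => by rw [← hDi]; exact hv i k) k
  have key2 : ∀ i k, relu ((X.mulVec ((sw i)⁻¹ • w i)) k) * sw i
      = ((D i).mulVec (X.mulVec (w i))) k := by
    intro i k
    obtain ⟨dd, hDi, hdd⟩ := hD i
    rw [hDi]
    exact neuron_eq X dd hdd (w i) (fun k => by rw [← hDi]; exact hw i k) k
  have hnet : ∀ k, net k = ∑ i, ((D i).mulVec (X.mulVec (v i - w i))) k := by
    intro k
    refine Finset.sum_congr rfl fun i _ => ?_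
    rw [key1 i k, key2 i k, Matrix.mulVec_sub, Matrix.mulVec_sub, Pi.sub_apply]
  refine ⟨hnet, ?_⟩
  have hterm : ∀ i, (l2norm ((sv i)⁻¹ • v i)) ^ 2 + (sv i) ^ 2
      + (l2norm ((sw i)⁻¹ • w i)) ^ 2 + (sw i) ^ 2
      = 2 * (l2norm (v i) + l2norm (w i)) := by
    intro i
    rw [l2norm_smul, l2norm_smul, mul_pow, mul_pow, sq_abs, sq_abs]
    have h1 := norm_term (l2norm (v i)) (l2norm_nonneg (v i))
    have h2 := norm_term (l2norm (w i)) (l2norm_nonneg (w i))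
    simp only [sv, sw] at *
    linarith
  have h2 : (∑ i, ((l2norm ((sv i)⁻¹ • v i)) ^ 2 + (sv i) ^ 2
      + (l2norm ((sw i)⁻¹ • w i)) ^ 2 + (sw i) ^ 2))
      = 2 * ∑ i, (l2norm (v i) + l2norm (w i)) := by
    rw [Finset.mul_sum]
    exact Finset.sum_congr rfl fun i _ => hterm i
  rw [h2]
  have h3 : (∑ k, (net k - y k) ^ 2)
      = ∑ k, (∑ i, ((D i).mulVec (X.mulVec (v i - w i))) k - y k) ^ 2 :=
    Finset.sum_congr rfl fun k _ => by rw [hnet k]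
  rw [h3]
  ring
end

section
/- Let U ∈ ℝ^{d×d} be a circulant matrix generated by u ∈ ℝ^d, so U = F D F^H where F is the unitary d×d DFT matrix and D = Diag(F^H-transform of u appropriately normalized) is diagonal with ‖D‖_F² = d‖u‖₂². Then for any X ∈ ℝ^{n×d} and v ∈ ℝ^n, the constraint ‖v^T X U‖₂ ≤ β for all circulant U with ‖u‖₂ ≤ 1 is equivalent to ‖v^T X F‖_∞ ≤ β/√d. -/
open Matrix

/-! Since `Fᴴ` is unitary, `‖vᵀ X F D Fᴴ‖₂ = ‖w ⊙ D‖₂` with `w = vᵀ X F`. The bound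
`|wⱼ Dⱼ| ≤ ‖w‖_∞ |Dⱼ|` shows that this is at most `√d ‖w‖_∞` when `‖D‖₂² ≤ d`, and the value
`√d |wⱼ|` is attained at `D = √d eⱼ`. -/

section

variable {𝕜 ι : Type*} [RCLike 𝕜] [Fintype ι]

lemma dotProduct_star_self_eq_sum_norm_sq (y : ι → 𝕜) :
    y ⬝ᵥ star y = ((∑ j, ‖y j‖ ^ 2 : ℝ) : 𝕜) := by
  simp only [dotProduct, Pi.star_apply, RCLike.star_def, RCLike.mul_conj]
  push_cast
  rfl

lemma sum_norm_vecMul_sq_of_mul_conjTranspose_eq_one [DecidableEq ι] {U : Matrix ι ι 𝕜}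
    (hU : U * Uᴴ = 1) (y : ι → 𝕜) : ∑ j, ‖(y ᵥ* U) j‖ ^ 2 = ∑ j, ‖y j‖ ^ 2 := by
  have h : (y ᵥ* U) ⬝ᵥ star (y ᵥ* U) = y ⬝ᵥ star y := by
    rw [star_vecMul, dotProduct_mulVec, vecMul_vecMul, hU, vecMul_one]
  rw [dotProduct_star_self_eq_sum_norm_sq, dotProduct_star_self_eq_sum_norm_sq] at h
  exact_mod_cast h

lemma sum_norm_mul_sq_le {w : ι → 𝕜} {c : ℝ} (hw : ∀ j, ‖w j‖ ≤ c) (D : ι → 𝕜) :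
    ∑ j, ‖w j * D j‖ ^ 2 ≤ c ^ 2 * ∑ j, ‖D j‖ ^ 2 := by
  rw [Finset.mul_sum]
  gcongr with j
  rw [norm_mul, mul_pow]
  gcongr
  exact hw j

lemma forall_sqrt_sum_norm_mul_sq_le_iff [Nonempty ι] (w : ι → 𝕜) {s : ℝ} (hs : 0 < s)
    (β : ℝ) : (∀ D : ι → 𝕜, ∑ j, ‖D j‖ ^ 2 ≤ s → √(∑ j, ‖w j * D j‖ ^ 2) ≤ β) ↔
      ∀ j, ‖w j‖ ≤ β / √s := by
  classical
  have hsqrt : 0 < √s := Real.sqrt_pos.mpr hs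
  have hnorm : ‖(√s : 𝕜)‖ = √s := by rw [RCLike.norm_ofReal, abs_of_pos hsqrt]
  constructor
  · intro h j
    have hj := h (Pi.single j (√s : 𝕜)) <| by
      simp [Pi.single_apply, apply_ite, hnorm, Real.sq_sqrt hs.le]
    rwa [Fintype.sum_eq_single j (fun k hk => by simp [hk]), Pi.single_eq_same, norm_mul, hnorm,
      Real.sqrt_sq (by positivity), ← le_div_iff₀ hsqrt] at hj
  · intro h D hD
    obtain ⟨j⟩ := ‹Nonempty ι›
    have hβ : 0 ≤ β := by
      have := (norm_nonneg _).trans (h j)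
      rwa [le_div_iff₀ hsqrt, zero_mul] at this
    calc √(∑ j, ‖w j * D j‖ ^ 2) ≤ √((β / √s) ^ 2 * s) :=
          Real.sqrt_le_sqrt ((sum_norm_mul_sq_le h D).trans (by gcongr))
      _ = β := by
        rw [div_pow, Real.sq_sqrt hs.le, div_mul_cancel₀ _ hs.ne', Real.sqrt_sq hβ]

end

theorem circulant_dft_constraint_general {n d : ℕ} (hd : 0 < d)
    (F : Matrix (Fin d) (Fin d) ℂ) (hF' : Fᴴ * F = 1)
    (X : Matrix (Fin n) (Fin d) ℝ) (v : Fin n → ℝ) (β : ℝ) :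
    (∀ D : Fin d → ℂ, (∑ j, ‖D j‖ ^ 2) ≤ (d : ℝ) →
      Real.sqrt (∑ j, ‖
        ((Matrix.vecMul (fun i => (v i : ℂ))
          (X.map (fun t => (t : ℂ)) * F * Matrix.diagonal D * Fᴴ)) j)‖ ^ 2) ≤ β) ↔
    (∀ j, ‖
        ((Matrix.vecMul (fun i => (v i : ℂ)) (X.map (fun t => (t : ℂ)) * F)) j)‖
      ≤ β / Real.sqrt d) := by
  have : Nonempty (Fin d) := Fin.pos_iff_nonempty.mp hd
  set w := Matrix.vecMul (fun i => (v i : ℂ)) (X.map (fun t => (t : ℂ)) * F)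
  have hfactor (D : Fin d → ℂ) :
      Matrix.vecMul (fun i => (v i : ℂ)) (X.map (fun t => (t : ℂ)) * F * diagonal D * Fᴴ) =
        (fun j => w j * D j) ᵥ* Fᴴ := by
    rw [← vecMul_vecMul, ← vecMul_vecMul]
    congr 1
    exact funext (vecMul_diagonal w D)
  have hunitary : Fᴴ * Fᴴᴴ = 1 := by rwa [conjTranspose_conjTranspose]
  simp only [hfactor, sum_norm_vecMul_sq_of_mul_conjTranspose_eq_one hunitary]
  exact forall_sqrt_sum_norm_mul_sq_le_iff w (Nat.cast_pos.mpr hd) β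

/-- Reduction of the linear circular convolution dual constraint to the Fourier domain
(Appendix A.6): with `F` the unitary DFT matrix diagonalizing circulant matrices
`U = F D Fᴴ` (where `‖D‖_F² = d ‖u‖₂²`), the constraint `‖vᵀXU‖₂ ≤ β` over all such
circulants with `‖u‖₂ ≤ 1` is equivalent to `‖vᵀXF‖_∞ ≤ β/√d`. -/
theorem circulant_dft_constraint {n d : ℕ} (hd : 0 < d)
    (F : Matrix (Fin d) (Fin d) ℂ) (hF : F * Fᴴ = 1) (hF' : Fᴴ * F = 1)
    (X : Matrix (Fin n) (Fin d) ℝ) (v : Fin n → ℝ) (β : ℝ) :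
    (∀ D : Fin d → ℂ, (∑ j, ‖D j‖ ^ 2) ≤ (d : ℝ) →
      Real.sqrt (∑ j, ‖
        ((Matrix.vecMul (fun i => (v i : ℂ))
          (X.map (fun t => (t : ℂ)) * F * Matrix.diagonal D * Fᴴ)) j)‖ ^ 2) ≤ β) ↔
    (∀ j, ‖
        ((Matrix.vecMul (fun i => (v i : ℂ)) (X.map (fun t => (t : ℂ)) * F)) j)‖
      ≤ β / Real.sqrt d) :=
  circulant_dft_constraint_general hd F hF' X v β
end
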